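/- arXiv:1507.02935 — 2 statements merged into one kernel-verified Lean document; each statement's English description precedes it below -/
import Mathlib

section
/- For i.i.d. Bernoulli(p) trials X_1,...,X_n with 0<p<1, q=1-p, and L(n) the length of the longest run of 1's, for all integers 1 ≤ k ≤ n one has (1-p^k)^{n-k+1} ≤ P(L(n) < k) ≤ (1-q p^k)^{n-k+1}. -/
/-!
Write `e m` for the probability that the first `m` trials contain no run of `k` successes. A first
run is completed by trial `m + k` (counting from `0`) exactly when trial `m` fails, trials
`m + 1, …, m + k` succeed and the first `m` trials contain no run; by independence,
`e (m + k) - e (m + k + 1) = q p ^ k e m`. As `e (m + k) ≤ e m`, and `q e m ≤ e (m + k)` because a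
failure at trial `m` cannot lie inside a run, the ratio `e (m + k + 1) / e (m + k)` lies between
`1 - p ^ k` and `1 - q p ^ k`. Starting from `e k = 1 - p ^ k`, this gives both bounds.
-/

open MeasureTheory ProbabilityTheory Filter Set
open scoped ENNReal Classical

/-- The longest run of `true`s among the first `n` trials `X 0, ..., X (n-1)`. -/
noncomputable def longestRun (X : ℕ → Bool) (n : ℕ) : ℕ :=
  (Finset.range (n + 1)).sup fun ℓ =>
    if ∃ i, i + ℓ ≤ n ∧ ∀ j < ℓ, X (i + j) = true then ℓ else 0

def HasRun (x : ℕ → Bool) (k n : ℕ) : Prop :=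
  ∃ i, i + k ≤ n ∧ ∀ j < k, x (i + j) = true

def ZeroThenOnes (x : ℕ → Bool) (m t : ℕ) : Prop :=
  ∀ i ∈ Finset.Icc m (m + t), x i = decide (m < i)

namespace HasRun

variable {x : ℕ → Bool} {k m n : ℕ}

lemma mono (h : m ≤ n) : HasRun x k m → HasRun x k n := by
  rintro ⟨i, hi, hrun⟩
  exact ⟨i, hi.trans h, hrun⟩

lemma self_iff : HasRun x k k ↔ ∀ j < k, x j = true := by
  refine ⟨fun ⟨i, hi, hrun⟩ => ?_, fun hrun => ⟨0, by omega, by simpa using hrun⟩⟩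
  obtain rfl : i = 0 := by omega
  simpa using hrun

lemma dependsOn : DependsOn (fun x => HasRun x k n) (Finset.range n : Set ℕ) := by
  intro x y hxy
  refine propext (exists_congr fun i => and_congr_right fun hi => forall₂_congr fun j hj => ?_)
  rw [hxy (i + j) (by simp; omega)]

end HasRun

lemma ZeroThenOnes.dependsOn {m t : ℕ} :
    DependsOn (fun x => ZeroThenOnes x m t) (Finset.Icc m (m + t) : Set ℕ) := by
  intro x y hxy
  exact propext (forall₂_congr fun i hi => by rw [hxy i hi])

lemma longestRun_lt_iff {x : ℕ → Bool} {k n : ℕ} (hk : 0 < k) :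
    longestRun x n < k ↔ ¬ HasRun x k n := by
  rw [longestRun, Finset.sup_lt_iff (by simpa [Nat.bot_eq_zero] using hk)]
  constructor
  · rintro h ⟨i, hi, hrun⟩
    have := h k (Finset.mem_range.2 (by omega))
    rw [if_pos ⟨i, hi, hrun⟩] at this
    exact this.false
  · intro h ℓ _
    split_ifs with hℓ
    · obtain ⟨i, hi, hrun⟩ := hℓ
      by_contra! hkℓ
      exact h ⟨i, by omega, fun j hj => hrun j (by omega)⟩
    · exact hk

lemma not_hasRun_add_of_eq_false {x : ℕ → Bool} {k m : ℕ} (hm : ¬ HasRun x k m)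
    (hx : x m = false) : ¬ HasRun x k (m + k) := by
  rintro ⟨i, hi, hrun⟩
  by_cases hik : i + k ≤ m
  · exact hm ⟨i, hik, hrun⟩
  · have := hrun (m - i) (by omega)
    rw [Nat.add_sub_cancel' (by omega), hx] at this
    exact Bool.false_ne_true this

lemma hasRun_of_zeroThenOnes {x : ℕ → Bool} {k m : ℕ} (h : ZeroThenOnes x m k) :
    HasRun x k (m + k + 1) :=
  ⟨m + 1, by omega, fun j hj => by
    rw [h (m + 1 + j) (Finset.mem_Icc.2 ⟨by omega, by omega⟩)]
    exact decide_eq_true (by omega)⟩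

lemma not_hasRun_add_iff {x : ℕ → Bool} {k m : ℕ} :
    ¬ HasRun x k (m + k) ↔ ¬ HasRun x k (m + k + 1) ∨ (¬ HasRun x k m ∧ ZeroThenOnes x m k) := by
  constructor
  · intro h
    by_cases hnext : HasRun x k (m + k + 1)
    · right
      obtain ⟨i, hi, hrun⟩ := hnext
      obtain rfl : i = m + 1 := by
        by_contra hne
        exact h ⟨i, by omega, hrun⟩
      refine ⟨fun hm => h (hm.mono (by omega)), fun l hl => ?_⟩
      obtain ⟨hml, hlk⟩ := Finset.mem_Icc.1 hl
      rcases hml.eq_or_lt with rfl | hml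
      · simp only [lt_irrefl, decide_false, Bool.eq_false_iff]
        intro hxm
        refine h ⟨m, by omega, fun j hj => ?_⟩
        rcases j with _ | j
        · simpa using hxm
        · simpa [Nat.add_right_comm, Nat.add_assoc] using hrun j (by omega)
      · simpa [hml, show m + 1 + (l - (m + 1)) = l by omega] using hrun (l - (m + 1)) (by omega)
    · exact Or.inl hnext
  · rintro (h | ⟨hm, hpat⟩)
    · exact fun hrun => h (hrun.mono (by omega))
    · exact not_hasRun_add_of_eq_false hm (by simpa using hpat m (by simp))

section Independence

variable {Ω ι β : Type*} {P Q : (ι → β) → Prop} {S T : Finset ι}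

lemma setOf_eq_preimage_of_dependsOn (hP : DependsOn P S) (X : ι → Ω → β) :
    {ω | P (X · ω)} = (fun ω (i : S) => X i ω) ⁻¹' {g | ∃ x, (∀ i : S, x i = g i) ∧ P x} := by
  ext ω
  refine ⟨fun h => ⟨(X · ω), fun _ => rfl, h⟩, fun ⟨x, hx, h⟩ => ?_⟩
  show P (X · ω)
  exact (hP (x := x) (y := (X · ω)) fun i hi => hx ⟨i, hi⟩) ▸ h

variable [MeasurableSpace Ω] [MeasurableSpace β] [Countable β] [MeasurableSingletonClass β]
  {X : ι → Ω → β}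

lemma measurableSet_setOf_of_dependsOn (hP : DependsOn P S) (hmeas : ∀ i, Measurable (X i)) :
    MeasurableSet {ω | P (X · ω)} := by
  rw [setOf_eq_preimage_of_dependsOn hP]
  exact measurable_pi_lambda (fun ω (i : S) => X i ω) (fun i => hmeas i)
    (Set.to_countable _).measurableSet

lemma ProbabilityTheory.iIndepFun.measure_inter_eq_mul_of_dependsOn {μ : Measure Ω}
    (hindep : iIndepFun X μ) (hmeas : ∀ i, Measurable (X i)) (hST : Disjoint S T)
    (hP : DependsOn P S) (hQ : DependsOn Q T) :
    μ ({ω | P (X · ω)} ∩ {ω | Q (X · ω)}) = μ {ω | P (X · ω)} * μ {ω | Q (X · ω)} := by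
  rw [setOf_eq_preimage_of_dependsOn hP, setOf_eq_preimage_of_dependsOn hQ]
  exact (hindep.indepFun_finset S T hST hmeas).measure_inter_preimage_eq_mul _ _
    (Set.to_countable _).measurableSet (Set.to_countable _).measurableSet

end Independence

section Bernoulli

variable {Ω : Type*} [MeasurableSpace Ω] {μ : Measure Ω} {X : ℕ → Ω → Bool} {p : ℝ}

lemma measureReal_preimage_true (hp : 0 ≤ p)
    (hdist : ∀ i, μ {ω | X i ω = true} = ENNReal.ofReal p) (i : ℕ) :
    μ.real (X i ⁻¹' {true}) = p :=
  (congrArg ENNReal.toReal (hdist i)).trans (ENNReal.toReal_ofReal hp)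

lemma measureReal_noRun_inter (hindep : iIndepFun X μ) (hmeas : ∀ i, Measurable (X i))
    {k m : ℕ} {T : Finset ℕ} (hT : ∀ i ∈ T, m ≤ i) {Q : (ℕ → Bool) → Prop}
    (hQ : DependsOn Q T) :
    μ.real ({ω | ¬ HasRun (X · ω) k m} ∩ {ω | Q (X · ω)}) =
      μ.real {ω | ¬ HasRun (X · ω) k m} * μ.real {ω | Q (X · ω)} := by
  have hdisj : Disjoint (Finset.range m) T :=
    Finset.disjoint_left.2 fun i hi hiT => (hT i hiT).not_gt (Finset.mem_range.1 hi)
  rw [measureReal_def, hindep.measure_inter_eq_mul_of_dependsOn hmeas hdisj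
    (fun _ _ h => congrArg Not (HasRun.dependsOn h)) hQ, ENNReal.toReal_mul, measureReal_def,
    measureReal_def]

variable [IsProbabilityMeasure μ]

lemma measureReal_preimage_false (hmeas : ∀ i, Measurable (X i)) (hp : 0 ≤ p)
    (hdist : ∀ i, μ {ω | X i ω = true} = ENNReal.ofReal p) (i : ℕ) :
    μ.real (X i ⁻¹' {false}) = 1 - p := by
  have hcompl : X i ⁻¹' {false} = (X i ⁻¹' {true})ᶜ := by ext; simp
  rw [hcompl, probReal_compl_eq_one_sub (hmeas i (measurableSet_singleton true)),
    measureReal_preimage_true hp hdist]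

lemma measureReal_zeroThenOnes (hindep : iIndepFun X μ) (hmeas : ∀ i, Measurable (X i))
    (hp : 0 ≤ p) (hdist : ∀ i, μ {ω | X i ω = true} = ENNReal.ofReal p) (m t : ℕ) :
    μ.real {ω | ZeroThenOnes (X · ω) m t} = (1 - p) * p ^ t := by
  have hinter : {ω | ZeroThenOnes (X · ω) m t} =
      ⋂ i ∈ Finset.Icc m (m + t), X i ⁻¹' {decide (m < i)} := by
    ext; simp [ZeroThenOnes]
  have hfirst : μ.real (X m ⁻¹' {decide (m < m)}) = 1 - p := by
    simpa using measureReal_preimage_false hmeas hp hdist m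
  have hrest (i : ℕ) (hi : i ∈ Finset.Ioc m (m + t)) : μ.real (X i ⁻¹' {decide (m < i)}) = p := by
    simpa [(Finset.mem_Ioc.1 hi).1] using measureReal_preimage_true hp hdist i
  rw [hinter, measureReal_def,
    hindep.measure_inter_preimage_eq_mul _ fun _ _ => measurableSet_singleton _,
    ENNReal.toReal_prod, ← Finset.Ioc_insert_left (by omega),
    Finset.prod_insert Finset.left_notMem_Ioc]
  simp only [← measureReal_def]
  rw [hfirst, Finset.prod_congr rfl hrest, Finset.prod_const, Nat.card_Ioc,
    Nat.add_sub_cancel_left]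

lemma measureReal_noRun_self (hindep : iIndepFun X μ) (hmeas : ∀ i, Measurable (X i))
    (hp : 0 ≤ p) (hdist : ∀ i, μ {ω | X i ω = true} = ENNReal.ofReal p) (k : ℕ) :
    μ.real {ω | ¬ HasRun (X · ω) k k} = 1 - p ^ k := by
  have hinter : {ω | HasRun (X · ω) k k} = ⋂ i ∈ Finset.range k, X i ⁻¹' {true} := by
    ext; simp [HasRun.self_iff]
  rw [← compl_ofPred, probReal_compl_eq_one_sub (measurableSet_setOf_of_dependsOn
    HasRun.dependsOn hmeas), hinter, measureReal_def,
    hindep.measure_inter_preimage_eq_mul _ fun _ _ => measurableSet_singleton _,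
    ENNReal.toReal_prod]
  simp only [← measureReal_def, measureReal_preimage_true hp hdist, Finset.prod_const,
    Finset.card_range]

lemma measureReal_noRun_recurrence (hindep : iIndepFun X μ) (hmeas : ∀ i, Measurable (X i))
    (hp : 0 ≤ p) (hdist : ∀ i, μ {ω | X i ω = true} = ENNReal.ofReal p) (k m : ℕ) :
    μ.real {ω | ¬ HasRun (X · ω) k (m + k)} =
      μ.real {ω | ¬ HasRun (X · ω) k (m + 1 + k)} +
        μ.real {ω | ¬ HasRun (X · ω) k m} * ((1 - p) * p ^ k) := by
  have hsplit : {ω | ¬ HasRun (X · ω) k (m + k)} = {ω | ¬ HasRun (X · ω) k (m + 1 + k)} ∪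
      ({ω | ¬ HasRun (X · ω) k m} ∩ {ω | ZeroThenOnes (X · ω) m k}) := by
    ext ω
    simpa only [Nat.add_right_comm m 1 k, Set.mem_union, Set.mem_inter_iff, Set.mem_ofPred_eq]
      using not_hasRun_add_iff
  have hdisj : Disjoint {ω | ¬ HasRun (X · ω) k (m + 1 + k)}
      ({ω | ¬ HasRun (X · ω) k m} ∩ {ω | ZeroThenOnes (X · ω) m k}) :=
    Set.disjoint_left.2 fun ω hnone hpat =>
      hnone (by simpa only [Nat.add_right_comm m 1 k] using hasRun_of_zeroThenOnes hpat.2)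
  have hmeasSet {Q : (ℕ → Bool) → Prop} {S : Finset ℕ} (hQ : DependsOn Q S) :=
    measurableSet_setOf_of_dependsOn hQ hmeas
  rw [hsplit, measureReal_union hdisj ((hmeasSet fun _ _ h => congrArg Not
      (HasRun.dependsOn h)).inter (hmeasSet ZeroThenOnes.dependsOn)),
    measureReal_noRun_inter hindep hmeas (fun i hi => (Finset.mem_Icc.1 hi).1)
      ZeroThenOnes.dependsOn, measureReal_zeroThenOnes hindep hmeas hp hdist]

lemma measureReal_noRun_antitone {k a b : ℕ} (hab : a ≤ b) :
    μ.real {ω | ¬ HasRun (X · ω) k b} ≤ μ.real {ω | ¬ HasRun (X · ω) k a} :=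
  measureReal_mono fun _ hb ha => hb (ha.mono hab)

lemma measureReal_noRun_mul_le (hindep : iIndepFun X μ) (hmeas : ∀ i, Measurable (X i))
    (hp : 0 ≤ p) (hdist : ∀ i, μ {ω | X i ω = true} = ENNReal.ofReal p) (k m : ℕ) :
    μ.real {ω | ¬ HasRun (X · ω) k m} * (1 - p) ≤ μ.real {ω | ¬ HasRun (X · ω) k (m + k)} := by
  have hfalse : DependsOn (fun x : ℕ → Bool => x m = false) ({m} : Finset ℕ) :=
    fun _ _ h => congrArg (· = false) (h m (by simp))
  calc μ.real {ω | ¬ HasRun (X · ω) k m} * (1 - p)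
      = μ.real ({ω | ¬ HasRun (X · ω) k m} ∩ {ω | X m ω = false}) := by
        rw [measureReal_noRun_inter hindep hmeas (by simp) hfalse,
          ← measureReal_preimage_false hmeas hp hdist m]
        rfl
    _ ≤ μ.real {ω | ¬ HasRun (X · ω) k (m + k)} :=
        measureReal_mono fun ω ⟨hnone, hm⟩ => not_hasRun_add_of_eq_false hnone hm

lemma measureReal_noRun_succ_bounds (hindep : iIndepFun X μ) (hmeas : ∀ i, Measurable (X i))
    (hp : 0 ≤ p) (hdist : ∀ i, μ {ω | X i ω = true} = ENNReal.ofReal p) (k m : ℕ) :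
    (1 - p ^ k) * μ.real {ω | ¬ HasRun (X · ω) k (m + k)} ≤
        μ.real {ω | ¬ HasRun (X · ω) k (m + 1 + k)} ∧
      μ.real {ω | ¬ HasRun (X · ω) k (m + 1 + k)} ≤
        (1 - (1 - p) * p ^ k) * μ.real {ω | ¬ HasRun (X · ω) k (m + k)} := by
  have hrec := measureReal_noRun_recurrence hindep hmeas hp hdist k m
  have hpad := measureReal_noRun_mul_le hindep hmeas hp hdist k m
  have hanti := measureReal_noRun_antitone (μ := μ) (X := X) (k := k) (Nat.le_add_right m k)
  have hq : 0 ≤ 1 - p := measureReal_preimage_false hmeas hp hdist 0 ▸ measureReal_nonneg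
  have hpk := pow_nonneg hp k
  constructor
  · nlinarith [mul_le_mul_of_nonneg_right hpad hpk]
  · nlinarith [mul_le_mul_of_nonneg_right hanti (mul_nonneg hq hpk)]

end Bernoulli

theorem longestRun_cdf_bounds_general
    {Ω : Type*} [MeasurableSpace Ω] (μ : Measure Ω) [IsProbabilityMeasure μ]
    (X : ℕ → Ω → Bool) (p : ℝ) (hp0 : 0 < p)
    (hmeas : ∀ i, Measurable (X i))
    (hindep : iIndepFun X μ)
    (hdist : ∀ i, μ {ω | X i ω = true} = ENNReal.ofReal p)
    (n k : ℕ) (hk : 1 ≤ k) (hkn : k ≤ n) :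
    (1 - p ^ k) ^ (n - k + 1) ≤
        (μ {ω | longestRun (fun i => X i ω) n < k}).toReal ∧
      (μ {ω | longestRun (fun i => X i ω) n < k}).toReal ≤
        (1 - (1 - p) * p ^ k) ^ (n - k + 1) := by
  obtain ⟨d, rfl⟩ : ∃ d, n = d + k := ⟨n - k, by omega⟩
  have hevent : {ω | longestRun (X · ω) (d + k) < k} = {ω | ¬ HasRun (X · ω) k (d + k)} :=
    Set.ext fun _ => longestRun_lt_iff hk
  set u : ℕ → ℝ := fun m => μ.real {ω | ¬ HasRun (X · ω) k (m + k)}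
  have hbase : u 0 = 1 - p ^ k := by
    simpa [u] using measureReal_noRun_self hindep hmeas hp0.le hdist k
  have hstep := measureReal_noRun_succ_bounds hindep hmeas hp0.le hdist k
  have hlower : 0 ≤ 1 - p ^ k := hbase ▸ measureReal_nonneg
  have hbase_le : 1 - p ^ k ≤ 1 - (1 - p) * p ^ k := by
    nlinarith [mul_nonneg hp0.le (pow_nonneg hp0.le k)]
  have hupper : 0 ≤ 1 - (1 - p) * p ^ k := hlower.trans hbase_le
  have hgeom_lower : (1 - p ^ k) ^ d * u 0 ≤ u d := geom_le hlower d fun m _ => (hstep m).1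
  have hgeom_upper : u d ≤ (1 - (1 - p) * p ^ k) ^ d * u 0 :=
    le_geom hupper d fun m _ => (hstep m).2
  rw [hbase] at hgeom_lower hgeom_upper
  rw [← measureReal_def, hevent, Nat.add_sub_cancel, pow_succ, pow_succ]
  exact ⟨hgeom_lower,
    hgeom_upper.trans (mul_le_mul_of_nonneg_left hbase_le (pow_nonneg hupper d))⟩

theorem longestRun_cdf_bounds
    {Ω : Type*} [MeasurableSpace Ω] (μ : Measure Ω) [IsProbabilityMeasure μ]
    (X : ℕ → Ω → Bool) (p : ℝ) (hp0 : 0 < p) (hp1 : p < 1)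
    (hmeas : ∀ i, Measurable (X i))
    (hindep : iIndepFun X μ)
    (hdist : ∀ i, μ {ω | X i ω = true} = ENNReal.ofReal p)
    (n k : ℕ) (hk : 1 ≤ k) (hkn : k ≤ n) :
    (1 - p ^ k) ^ (n - k + 1) ≤
        (μ {ω | longestRun (fun i => X i ω) n < k}).toReal ∧
      (μ {ω | longestRun (fun i => X i ω) n < k}).toReal ≤
        (1 - (1 - p) * p ^ k) ^ (n - k + 1) :=
  longestRun_cdf_bounds_general μ X p hp0 hmeas hindep hdist n k hk hkn
end

section
/- For i.i.d. Bernoulli(p) trials with 0<p<1 and every fixed x with 0 ≤ x ≤ 1, lim_{n→∞} (1/n) ln P(L(n)/n ≥ x) = -x ln(1/p). -/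
/-! A success run of length `k` has probability at least `p ^ k` (the first `k` trials succeed) and,
by a union bound over its starting position, at most `(n + 1) * p ^ k`. With `k = ⌈x n⌉₊` the
normalised logarithm of the tail probability is therefore squeezed between `(k / n) log p` and
`(k / n) log p + log (n + 1) / n`, both of which tend to `x log p`. -/

open MeasureTheory ProbabilityTheory Filter Set
open scoped ENNReal Classical

lemma tendsto_log_natCast_add_one_div :
    Tendsto (fun n : ℕ => Real.log (n + 1) / n) atTop (nhds 0) := by
  have h := (Real.tendsto_pow_log_div_mul_add_atTop 1 (-1) 1 one_ne_zero).comp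
    (tendsto_atTop_add_const_right _ 1 tendsto_natCast_atTop_atTop)
  simpa [Function.comp_def] using h

lemma tendsto_one_div_mul_log_of_pow_le_of_le_mul_pow {c x : ℝ} (hc : 0 < c) {a : ℕ → ℝ}
    {k : ℕ → ℕ} (hk : Tendsto (fun n => (k n : ℝ) / n) atTop (nhds x))
    (hlow : ∀ᶠ n in atTop, c ^ k n ≤ a n)
    (hup : ∀ᶠ n in atTop, a n ≤ (n + 1) * c ^ k n) :
    Tendsto (fun n : ℕ => (1 / (n : ℝ)) * Real.log (a n)) atTop (nhds (x * Real.log c)) := by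
  have hlower : Tendsto (fun n : ℕ => (k n : ℝ) / n * Real.log c) atTop
      (nhds (x * Real.log c)) := hk.mul_const _
  have hupper := hlower.add tendsto_log_natCast_add_one_div
  rw [add_zero] at hupper
  refine tendsto_of_tendsto_of_tendsto_of_le_of_le' hlower hupper ?_ ?_
  · filter_upwards [hlow] with n hn
    calc (k n : ℝ) / n * Real.log c = 1 / n * Real.log (c ^ k n) := by
          rw [Real.log_pow]; ring
      _ ≤ 1 / n * Real.log (a n) := by gcongr
  · filter_upwards [hlow, hup] with n hn hn'
    calc 1 / (n : ℝ) * Real.log (a n) ≤ 1 / n * Real.log ((n + 1) * c ^ k n) := by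
          gcongr
          exact (pow_pos hc _).trans_le hn
      _ = (k n : ℝ) / n * Real.log c + Real.log (n + 1) / n := by
          rw [Real.log_mul (by positivity) (by positivity), Real.log_pow]; ring

lemma le_longestRun_iff {X : ℕ → Bool} {n k : ℕ} :
    k ≤ longestRun X n ↔ ∃ i, i + k ≤ n ∧ ∀ j < k, X (i + j) = true := by
  constructor
  · intro h
    rcases Nat.eq_zero_or_pos k with rfl | hk
    · exact ⟨0, by omega, by simp⟩
    obtain ⟨ℓ, -, hℓ⟩ := (Finset.le_sup_iff hk).1 h
    split_ifs at hℓ with hrun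
    · obtain ⟨i, hin, hi⟩ := hrun
      exact ⟨i, by omega, fun j hj => hi j (by omega)⟩
    · omega
  · rintro ⟨i, hin, hi⟩
    refine le_trans ?_ (Finset.le_sup (Finset.mem_range.2 (Nat.lt_succ_of_le (by omega : k ≤ n))))
    rw [if_pos ⟨i, hin, hi⟩]

def runEvent {Ω : Type*} (X : ℕ → Ω → Bool) (i k : ℕ) : Set Ω :=
  ⋂ m ∈ Finset.Ico i (i + k), X m ⁻¹' {true}

section RunEvents

variable {Ω : Type*} {X : ℕ → Ω → Bool}

lemma mem_runEvent {ω : Ω} {i k : ℕ} :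
    ω ∈ runEvent X i k ↔ ∀ j < k, X (i + j) ω = true := by
  simp only [runEvent, mem_iInter, Finset.mem_Ico, mem_preimage, mem_singleton_iff]
  exact ⟨fun h j hj => h _ ⟨by omega, by omega⟩,
    fun h m hm => by simpa [Nat.add_sub_cancel' hm.1] using h (m - i) (by omega)⟩

lemma setOf_le_longestRun_eq_biUnion (n k : ℕ) :
    {ω | k ≤ longestRun (fun i => X i ω) n} =
      ⋃ i ∈ Finset.range (n + 1 - k), runEvent X i k := by
  ext ω
  simp only [mem_ofPred_eq, le_longestRun_iff, mem_iUnion, mem_runEvent, Finset.mem_range,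
    exists_prop]
  exact exists_congr fun i => and_congr_left fun _ => by omega

variable [MeasurableSpace Ω] {μ : Measure Ω} {p : ℝ}

lemma measureReal_runEvent (hp : 0 ≤ p) (hindep : iIndepFun X μ)
    (hdist : ∀ i, μ {ω | X i ω = true} = ENNReal.ofReal p) (i k : ℕ) :
    μ.real (runEvent X i k) = p ^ k := by
  rw [measureReal_def, runEvent, hindep.meas_biInter fun m _ => ⟨{true}, trivial, rfl⟩]
  have hdist' : ∀ m, μ (X m ⁻¹' {true}) = ENNReal.ofReal p := hdist
  rw [Finset.prod_congr rfl fun m _ => hdist' m, Finset.prod_const, Nat.card_Ico,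
    Nat.add_sub_cancel_left, ENNReal.toReal_pow, ENNReal.toReal_ofReal hp]

lemma pow_le_measureReal_le_longestRun [IsFiniteMeasure μ] (hp : 0 ≤ p)
    (hindep : iIndepFun X μ)
    (hdist : ∀ i, μ {ω | X i ω = true} = ENNReal.ofReal p) {n k : ℕ} (hk : k ≤ n) :
    p ^ k ≤ μ.real {ω | k ≤ longestRun (fun i => X i ω) n} := by
  rw [← measureReal_runEvent hp hindep hdist 0 k, setOf_le_longestRun_eq_biUnion]
  have h0 : 0 ∈ Finset.range (n + 1 - k) := Finset.mem_range.2 (by omega)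
  exact measureReal_mono (subset_biUnion_of_mem (u := fun i => runEvent X i k) h0)
    (measure_ne_top _ _)

lemma measureReal_le_longestRun_le (hp : 0 ≤ p) (hindep : iIndepFun X μ)
    (hdist : ∀ i, μ {ω | X i ω = true} = ENNReal.ofReal p) (n k : ℕ) :
    μ.real {ω | k ≤ longestRun (fun i => X i ω) n} ≤ (n + 1) * p ^ k := by
  rw [setOf_le_longestRun_eq_biUnion]
  calc _ ≤ ∑ i ∈ Finset.range (n + 1 - k), μ.real (runEvent X i k) :=
        measureReal_biUnion_finset_le _ _
    _ = (n + 1 - k : ℕ) * p ^ k := by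
        simp [measureReal_runEvent hp hindep hdist]
    _ ≤ (n + 1) * p ^ k := by
        gcongr
        exact_mod_cast Nat.sub_le _ _

end RunEvents

theorem longestRun_linear_tail_log_asymptotics_general
    {Ω : Type*} [MeasurableSpace Ω] (μ : Measure Ω) [IsProbabilityMeasure μ]
    (X : ℕ → Ω → Bool) (p : ℝ) (hp0 : 0 < p)
    (hindep : iIndepFun X μ)
    (hdist : ∀ i, μ {ω | X i ω = true} = ENNReal.ofReal p)
    (x : ℝ) (hx0 : 0 ≤ x) (hx1 : x ≤ 1) :
    Tendsto (fun n : ℕ => (1 / (n : ℝ)) *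
        Real.log ((μ {ω | x ≤ (longestRun (fun i => X i ω) n : ℝ) / (n : ℝ)}).toReal))
      atTop (nhds (-x * Real.log (1 / p))) := by
  have hlimit : -x * Real.log (1 / p) = x * Real.log p := by
    rw [one_div, Real.log_inv, neg_mul_neg]
  have htail : ∀ n : ℕ, 0 < n →
      {ω | x ≤ (longestRun (fun i => X i ω) n : ℝ) / (n : ℝ)} = {ω | ⌈x * n⌉₊ ≤ longestRun (fun i => X i ω) n} := fun n hn => by
    ext ω
    simp only [mem_ofPred_eq, le_div_iff₀ (Nat.cast_pos.2 hn : (0 : ℝ) < n), Nat.ceil_le]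
  rw [hlimit]
  refine tendsto_one_div_mul_log_of_pow_le_of_le_mul_pow hp0
    ((tendsto_nat_ceil_mul_div_atTop hx0).comp tendsto_natCast_atTop_atTop) ?_ ?_
  all_goals filter_upwards [eventually_gt_atTop 0] with n hn
  · rw [htail n hn]
    refine pow_le_measureReal_le_longestRun hp0.le hindep hdist (Nat.ceil_le.2 ?_)
    nlinarith
  · rw [htail n hn]
    exact measureReal_le_longestRun_le hp0.le hindep hdist n _

theorem longestRun_linear_tail_log_asymptotics
    {Ω : Type*} [MeasurableSpace Ω] (μ : Measure Ω) [IsProbabilityMeasure μ]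
    (X : ℕ → Ω → Bool) (p : ℝ) (hp0 : 0 < p) (hp1 : p < 1)
    (hmeas : ∀ i, Measurable (X i))
    (hindep : iIndepFun X μ)
    (hdist : ∀ i, μ {ω | X i ω = true} = ENNReal.ofReal p)
    (x : ℝ) (hx0 : 0 ≤ x) (hx1 : x ≤ 1) :
    Tendsto (fun n : ℕ => (1 / (n : ℝ)) *
        Real.log ((μ {ω | x ≤ (longestRun (fun i => X i ω) n : ℝ) / (n : ℝ)}).toReal))
      atTop (nhds (-x * Real.log (1 / p))) :=
  longestRun_linear_tail_log_asymptotics_general μ X p hp0 hindep hdist x hx0 hx1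
end
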